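/- arXiv:math/0405513 — 3 statements merged into one kernel-verified Lean document; each statement's English description precedes it below -/
import Mathlib

section
/- Let f be twice continuously differentiable and nowhere zero on Ω and let P := 1 − (1/(f†f)) f f†. Then at each point of Ω, f satisfies the CP^{N−1} Euler–Lagrange equation P·(∂_L∂_R f − (1/(f†f))((f†∂_Rf)∂_Lf + (f†∂_Lf)∂_Rf)) = 0 if and only if the matrix equation [∂_L∂_R P, P] = 0 holds there, where [·,·] is the matrix commutator. -/
open Matrix

noncomputable section

attribute [local instance] Matrix.normedAddCommGroup Matrix.normedSpace

/-- Vectors in ℂ^N. -/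
abbrev Vec (N : ℕ) := Fin N → ℂ

/-- Hermitian inner product v† w. -/
def hermIP {N : ℕ} (v w : Vec N) : ℂ := dotProduct (star v) w

/-- The matrix v w†. -/
def outerM {N : ℕ} (v w : Vec N) : Matrix (Fin N) (Fin N) ℂ := vecMulVec v (star w)

/-- The projector P = 1 − (1/(f†f)) f f†. -/
def projM {N : ℕ} (f : Vec N) : Matrix (Fin N) (Fin N) ℂ :=
  1 - (1 / hermIP f f) • outerM f f

/-- Matrix commutator [A,B] = AB − BA. -/
def mcomm {N : ℕ} (A B : Matrix (Fin N) (Fin N) ℂ) : Matrix (Fin N) (Fin N) ℂ :=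
  A * B - B * A

/-- Light-cone direction ξ_L. -/
def dL : ℝ × ℝ := (1, 0)

/-- Light-cone direction ξ_R. -/
def dR : ℝ × ℝ := (0, 1)

/-- Directional (partial) derivative in direction `v`. -/
def pdv {E : Type*} [NormedAddCommGroup E] [NormedSpace ℝ E]
    (v : ℝ × ℝ) (g : ℝ × ℝ → E) (p : ℝ × ℝ) : E := fderiv ℝ g p v

/-- The CP^{N−1} Euler–Lagrange equation
P·(∂_L∂_R f − (1/(f†f))((f†∂_Rf)∂_Lf + (f†∂_Lf)∂_Rf)) = 0 at a point. -/
def EL {N : ℕ} (f : ℝ × ℝ → Vec N) (p : ℝ × ℝ) : Prop :=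
  projM (f p) *ᵥ (pdv dL (fun q => pdv dR f q) p
    - (1 / hermIP (f p) (f p)) • (hermIP (f p) (pdv dR f p) • pdv dL f p
      + hermIP (f p) (pdv dL f p) • pdv dR f p)) = 0

/-! Write `P = projM ∘ f` and `F = f p`. Differentiating the identities `P F = 0` and `P² = P`
gives `∂P F = -P ∂F` and `P ∂P = ∂P (1 - P)`; differentiating `P F = 0` twice and projecting
with `P` then turns `P (∂_L∂_R P) F` into `-P E`, where `E` is the vector in the Euler–Lagrange
equation. On the other side, for Hermitian `X` (and `∂_L∂_R P` is Hermitian because `P` is),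
`[X, P] = (F F†X - X F F†) / F†F`, which vanishes exactly when `X F` is parallel to `F`,
i.e. when `P X F = 0`. -/

open Topology

section Algebra

variable {N : ℕ}

lemma star_hermIP (v w : Vec N) : star (hermIP v w) = hermIP w v := by
  rw [hermIP, hermIP, star_dotProduct, star_star, dotProduct_comm]

open scoped ComplexOrder in
lemma hermIP_self_ne_zero {v : Vec N} (hv : v ≠ 0) : hermIP v v ≠ 0 :=
  dotProduct_star_self_eq_zero.not.mpr hv

lemma hermIP_mulVec (X : Matrix (Fin N) (Fin N) ℂ) (v w : Vec N) :
    hermIP v (X *ᵥ w) = hermIP (Xᴴ *ᵥ v) w := by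
  rw [hermIP, hermIP, dotProduct_mulVec, star_mulVec, conjTranspose_conjTranspose]

lemma outerM_mulVec (v w x : Vec N) : outerM v w *ᵥ x = hermIP w x • v := by
  rw [outerM, vecMulVec_mulVec, op_smul_eq_smul, hermIP]

lemma mul_outerM (X : Matrix (Fin N) (Fin N) ℂ) (v w : Vec N) :
    X * outerM v w = outerM (X *ᵥ v) w :=
  mul_vecMulVec X v (star w)

lemma outerM_mul (X : Matrix (Fin N) (Fin N) ℂ) (v w : Vec N) :
    outerM v w * X = outerM v (Xᴴ *ᵥ w) := by
  rw [outerM, outerM, vecMulVec_mul, star_mulVec, conjTranspose_conjTranspose]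

lemma outerM_smul_left (c : ℂ) (v w : Vec N) : outerM (c • v) w = c • outerM v w :=
  smul_vecMulVec c v (star w)

lemma outerM_smul_right (c : ℂ) (v w : Vec N) : outerM v (c • w) = star c • outerM v w := by
  rw [outerM, star_smul, vecMulVec_smul, outerM]

lemma projM_mulVec (F u : Vec N) :
    projM F *ᵥ u = u - (hermIP F u / hermIP F F) • F := by
  rw [projM, sub_mulVec, one_mulVec, smul_mulVec, outerM_mulVec, smul_smul, one_div_mul_eq_div]

lemma projM_mulVec_self (F : Vec N) : projM F *ᵥ F = 0 := by
  rcases eq_or_ne F 0 with rfl | hF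
  · exact mulVec_zero _
  · rw [projM_mulVec, div_self (hermIP_self_ne_zero hF), one_smul, sub_self]

lemma projM_mul_self (F : Vec N) : projM F * projM F = projM F := by
  conv_lhs => arg 2; rw [projM]
  rw [mul_sub, mul_one, mul_smul_comm, mul_outerM, projM_mulVec_self, outerM, zero_vecMulVec,
    smul_zero, sub_zero]

lemma isSelfAdjoint_projM (F : Vec N) : IsSelfAdjoint (projM F) := by
  have hr : IsSelfAdjoint (hermIP F F) := star_hermIP F F
  have hM : IsSelfAdjoint (outerM F F) := by
    rw [IsSelfAdjoint, star_eq_conjTranspose, outerM, conjTranspose_vecMulVec, star_star]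
  exact (IsSelfAdjoint.one _).sub (((IsSelfAdjoint.one _).div hr).smul hM)

lemma mcomm_projM (F : Vec N) {X : Matrix (Fin N) (Fin N) ℂ} (hX : IsSelfAdjoint X) :
    mcomm X (projM F) = (1 / hermIP F F) • (outerM F (X *ᵥ F) - outerM (X *ᵥ F) F) := by
  have hXH : Xᴴ = X := hX
  rw [mcomm, projM, mul_sub, sub_mul, mul_one, one_mul, mul_smul_comm, smul_mul_assoc,
    mul_outerM, outerM_mul, hXH, smul_sub]
  abel

lemma mcomm_projM_eq_zero_iff {F : Vec N} (hF : F ≠ 0) {X : Matrix (Fin N) (Fin N) ℂ}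
    (hX : IsSelfAdjoint X) : mcomm X (projM F) = 0 ↔ projM F *ᵥ (X *ᵥ F) = 0 := by
  have hr : hermIP F F ≠ 0 := hermIP_self_ne_zero hF
  have hXF_real : hermIP (X *ᵥ F) F = hermIP F (X *ᵥ F) := by
    rw [hermIP_mulVec, show Xᴴ = X from hX]
  rw [mcomm_projM F hX, smul_eq_zero, one_div, inv_eq_zero, or_iff_right hr, sub_eq_zero,
    projM_mulVec, sub_eq_zero]
  constructor
  · intro h
    have h' := congrArg (· *ᵥ F) h
    simp only [outerM_mulVec, hXF_real] at h'
    rw [div_eq_inv_mul, mul_smul, h', inv_smul_smul₀ hr]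
  · intro h
    rw [h, outerM_smul_right, outerM_smul_left, star_div₀, star_hermIP, star_hermIP, hXF_real]

end Algebra

section Calculus

variable {E F G : Type*} [NormedAddCommGroup E] [NormedSpace ℝ E] [NormedAddCommGroup F]
  [NormedSpace ℝ F] [NormedAddCommGroup G] [NormedSpace ℝ G]

lemma pdv_const (v : ℝ × ℝ) (c : E) : pdv v (fun _ => c) = 0 := by
  funext q; simp [pdv]

lemma ContDiffAt.differentiableAt_pdv {g : ℝ × ℝ → E} {p : ℝ × ℝ} (hg : ContDiffAt ℝ 2 g p)
    (v : ℝ × ℝ) : DifferentiableAt ℝ (fun q => pdv v g q) p :=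
  ((hg.fderiv_right (m := 1) (by norm_num)).differentiableAt (by norm_num)).clm_apply
    (differentiableAt_const v)

lemma pdv_bilinear (B : E →L[ℝ] F →L[ℝ] G) {a : ℝ × ℝ → E} {b : ℝ × ℝ → F} {q : ℝ × ℝ}
    (ha : DifferentiableAt ℝ a q) (hb : DifferentiableAt ℝ b q) (v : ℝ × ℝ) :
    pdv v (fun r => B (a r) (b r)) q = B (pdv v a q) (b q) + B (a q) (pdv v b q) := by
  simp only [pdv, B.fderiv_of_bilinear ha hb, _root_.add_apply,
    ContinuousLinearMap.precompR_apply, ContinuousLinearMap.precompL_apply]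
  exact add_comm _ _

lemma pdv_pdv_bilinear (B : E →L[ℝ] F →L[ℝ] G) {a : ℝ × ℝ → E} {b : ℝ × ℝ → F} {p : ℝ × ℝ}
    (ha : ContDiffAt ℝ 2 a p) (hb : ContDiffAt ℝ 2 b p) (v w : ℝ × ℝ) :
    pdv v (fun q => pdv w (fun r => B (a r) (b r)) q) p =
      B (pdv v (fun q => pdv w a q) p) (b p) + B (pdv w a p) (pdv v b p)
        + B (pdv v a p) (pdv w b p) + B (a p) (pdv v (fun q => pdv w b q) p) := by
  have hda : ∀ᶠ q in 𝓝 p, DifferentiableAt ℝ a q :=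
    (ha.eventually (by simp)).mono fun q hq => hq.differentiableAt (by norm_num)
  have hdb : ∀ᶠ q in 𝓝 p, DifferentiableAt ℝ b q :=
    (hb.eventually (by simp)).mono fun q hq => hq.differentiableAt (by norm_num)
  have hfirst : (fun q => pdv w (fun r => B (a r) (b r)) q) =ᶠ[𝓝 p]
      fun q => B (pdv w a q) (b q) + B (a q) (pdv w b q) := by
    filter_upwards [hda, hdb] with q hqa hqb using pdv_bilinear B hqa hqb w
  have ha1 := ha.differentiableAt (by norm_num)
  have hb1 := hb.differentiableAt (by norm_num)
  have had := ha.differentiableAt_pdv w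
  have hbd := hb.differentiableAt_pdv w
  rw [pdv, hfirst.fderiv_eq, fderiv_fun_add (by fun_prop) (by fun_prop), _root_.add_apply]
  change pdv v (fun q => B (pdv w a q) (b q)) p + pdv v (fun q => B (a q) (pdv w b q)) p = _
  rw [pdv_bilinear B had hb1, pdv_bilinear B ha1 hbd]
  abel

lemma isSelfAdjoint_pdv [StarAddMonoid E] [StarModule ℝ E] [ContinuousStar E] {g : ℝ × ℝ → E}
    (hg : ∀ q, IsSelfAdjoint (g q)) (v q : ℝ × ℝ) : IsSelfAdjoint (pdv v g q) := by
  have : (fun r => star (g r)) = g := funext hg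
  rw [IsSelfAdjoint, pdv]
  conv_rhs => rw [← this, fderiv_star]
  rfl

end Calculus

section MatrixCalculus

variable {l m n : Type*} [Fintype l] [Fintype m] [Fintype n]

lemma pdv_mulVec {A : ℝ × ℝ → Matrix m n ℂ} {u : ℝ × ℝ → n → ℂ} {q : ℝ × ℝ}
    (hA : DifferentiableAt ℝ A q) (hu : DifferentiableAt ℝ u q) (v : ℝ × ℝ) :
    pdv v (fun r => A r *ᵥ u r) q = pdv v A q *ᵥ u q + A q *ᵥ pdv v u q :=
  pdv_bilinear (mulVecBilin ℝ ℝ : Matrix m n ℂ →ₗ[ℝ] _ →ₗ[ℝ] _).toContinuousBilinearMap hA hu v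

lemma pdv_pdv_mulVec {A : ℝ × ℝ → Matrix m n ℂ} {u : ℝ × ℝ → n → ℂ} {p : ℝ × ℝ}
    (hA : ContDiffAt ℝ 2 A p) (hu : ContDiffAt ℝ 2 u p) (v w : ℝ × ℝ) :
    pdv v (fun q => pdv w (fun r => A r *ᵥ u r) q) p =
      pdv v (fun q => pdv w A q) p *ᵥ u p + pdv w A p *ᵥ pdv v u p
        + pdv v A p *ᵥ pdv w u p + A p *ᵥ pdv v (fun q => pdv w u q) p :=
  pdv_pdv_bilinear (mulVecBilin ℝ ℝ : Matrix m n ℂ →ₗ[ℝ] _ →ₗ[ℝ] _).toContinuousBilinearMap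
    hA hu v w

lemma pdv_mul {A : ℝ × ℝ → Matrix l m ℂ} {B : ℝ × ℝ → Matrix m n ℂ} {q : ℝ × ℝ}
    (hA : DifferentiableAt ℝ A q) (hB : DifferentiableAt ℝ B q) (v : ℝ × ℝ) :
    pdv v (fun r => A r * B r) q = pdv v A q * B q + A q * pdv v B q :=
  pdv_bilinear (mulLinearMap ℝ : Matrix l m ℂ →ₗ[ℝ] Matrix m n ℂ →ₗ[ℝ] _).toContinuousBilinearMap
    hA hB v

lemma mul_pdv_of_isIdempotentElem [DecidableEq n] {A : ℝ × ℝ → Matrix n n ℂ}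
    (hA : ∀ q, IsIdempotentElem (A q)) {p : ℝ × ℝ} (hd : DifferentiableAt ℝ A p) (v : ℝ × ℝ) :
    A p * pdv v A p = pdv v A p * (1 - A p) := by
  have h : pdv v A p = pdv v A p * A p + A p * pdv v A p := by
    simpa only [(hA _).eq] using pdv_mul hd hd v
  rw [mul_sub, mul_one, eq_sub_iff_add_eq, add_comm]
  exact h.symm

end MatrixCalculus

section ProjectorCalculus

variable {N : ℕ}

lemma contDiffAt_projM {n : WithTop ℕ∞} {F : Vec N} (hF : F ≠ 0) : ContDiffAt ℝ n projM F := by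
  -- `star` on `ℂ` is presented as the `ℝ`-linear map `conjCLE`, which `fun_prop` handles
  have hr : ContDiff ℝ n fun F : Vec N => hermIP F F := by
    change ContDiff ℝ n fun F : Vec N => ∑ i, Complex.conjCLE (F i) * F i
    fun_prop
  have hM : ContDiff ℝ n fun F : Vec N => outerM F F := by
    refine contDiff_pi.2 fun i => contDiff_pi.2 fun j => ?_
    change ContDiff ℝ n fun F : Vec N => F i * Complex.conjCLE (F j)
    fun_prop
  have hinv : ContDiffAt ℝ n (fun F : Vec N => (hermIP F F)⁻¹) F :=
    hr.contDiffAt.inv (hermIP_self_ne_zero hF)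
  have hP : projM = fun F : Vec N => 1 - (hermIP F F)⁻¹ • outerM F F := by
    funext F; rw [projM, one_div]
  rw [hP]
  exact contDiffAt_const.sub (hinv.smul hM.contDiffAt)

variable {f : ℝ × ℝ → Vec N} {p : ℝ × ℝ}

lemma pdv_projM_mulVec_self (hf : DifferentiableAt ℝ f p) (hfp : f p ≠ 0) (v : ℝ × ℝ) :
    pdv v (fun q => projM (f q)) p *ᵥ f p = -(projM (f p) *ᵥ pdv v f p) := by
  have hP : DifferentiableAt ℝ (fun q => projM (f q)) p :=
    ((contDiffAt_projM (n := 1) hfp).differentiableAt one_ne_zero).comp p hf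
  have h := pdv_mulVec hP hf v
  simp only [projM_mulVec_self, pdv_const, Pi.zero_apply] at h
  exact eq_neg_of_add_eq_zero_left h.symm

lemma projM_mulVec_pdv_projM_mulVec (hf : DifferentiableAt ℝ f p) (hfp : f p ≠ 0)
    (v : ℝ × ℝ) (x : Vec N) :
    projM (f p) *ᵥ (pdv v (fun q => projM (f q)) p *ᵥ x) =
      -((hermIP (f p) x / hermIP (f p) (f p)) • (projM (f p) *ᵥ pdv v f p)) := by
  have hP : DifferentiableAt ℝ (fun q => projM (f q)) p :=
    ((contDiffAt_projM (n := 1) hfp).differentiableAt one_ne_zero).comp p hf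
  rw [mulVec_mulVec, mul_pdv_of_isIdempotentElem (fun q => projM_mul_self (f q)) hP,
    ← mulVec_mulVec, sub_mulVec, one_mulVec, projM_mulVec, sub_sub_cancel, mulVec_smul,
    pdv_projM_mulVec_self hf hfp, smul_neg]

def eulerLagrangeVec (v w : ℝ × ℝ) (f : ℝ × ℝ → Vec N) (p : ℝ × ℝ) : Vec N :=
  pdv v (fun q => pdv w f q) p
    - (1 / hermIP (f p) (f p)) • (hermIP (f p) (pdv w f p) • pdv v f p
      + hermIP (f p) (pdv v f p) • pdv w f p)

lemma EL_iff_projM_mulVec_eulerLagrangeVec :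
    EL f p ↔ projM (f p) *ᵥ eulerLagrangeVec dL dR f p = 0 :=
  Iff.rfl

lemma projM_mulVec_pdv_pdv_projM_mulVec (hf : ContDiffAt ℝ 2 f p) (hfp : f p ≠ 0)
    (v w : ℝ × ℝ) :
    projM (f p) *ᵥ (pdv v (fun q => pdv w (fun r => projM (f r)) q) p *ᵥ f p) =
      -(projM (f p) *ᵥ eulerLagrangeVec v w f p) := by
  have hP : ContDiffAt ℝ 2 (fun q => projM (f q)) p := (contDiffAt_projM hfp).comp p hf
  have hsecond := pdv_pdv_mulVec hP hf v w
  simp only [projM_mulVec_self, pdv_const, Pi.zero_apply] at hsecond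
  have hprojected := congrArg (projM (f p) *ᵥ ·) hsecond
  simp only [mulVec_zero, mulVec_add, mulVec_mulVec, projM_mul_self,
    projM_mulVec_pdv_projM_mulVec (hf.differentiableAt two_ne_zero) hfp] at hprojected
  rw [mulVec_mulVec, eulerLagrangeVec, mulVec_sub, mulVec_smul, mulVec_add, mulVec_smul,
    mulVec_smul]
  linear_combination (norm := module) hprojected.symm

end ProjectorCalculus

theorem stmt0_general {N : ℕ} (Ω : Set (ℝ × ℝ)) (hΩ : IsOpen Ω)
    (f : ℝ × ℝ → Vec N) (hf : ContDiffOn ℝ 2 f Ω) (hfz : ∀ p ∈ Ω, f p ≠ 0) :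
    ∀ p ∈ Ω, EL f p ↔
      mcomm (pdv dL (fun q => pdv dR (fun r => projM (f r)) q) p) (projM (f p)) = 0 := by
  intro p hp
  have hP_sa : IsSelfAdjoint (pdv dL (fun q => pdv dR (fun r => projM (f r)) q) p) :=
    isSelfAdjoint_pdv (isSelfAdjoint_pdv (fun r => isSelfAdjoint_projM (f r)) dR) dL p
  rw [EL_iff_projM_mulVec_eulerLagrangeVec, mcomm_projM_eq_zero_iff (hfz p hp) hP_sa,
    projM_mulVec_pdv_pdv_projM_mulVec ((hf p hp).contDiffAt (hΩ.mem_nhds hp)) (hfz p hp),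
    neg_eq_zero]

theorem stmt0 {N : ℕ} (hN : 2 ≤ N) (Ω : Set (ℝ × ℝ)) (hΩ : IsOpen Ω)
    (f : ℝ × ℝ → Vec N) (hf : ContDiffOn ℝ 2 f Ω) (hfz : ∀ p ∈ Ω, f p ≠ 0) :
    ∀ p ∈ Ω, EL f p ↔
      mcomm (pdv dL (fun q => pdv dR (fun r => projM (f r)) q) p) (projM (f p)) = 0 :=
  stmt0_general Ω hΩ f hf hfz
end
end

section
/- Let P, A, B, C be N×N complex matrices with P² = P, and suppose A = PA + AP, B = PB + BP, and C = PC + CP. Then tr([A, B]·[C, P]) = 0. In particular, if P(ξ_L, ξ_R) is a differentiable family of idempotent matrices (so each partial derivative ∂P satisfies ∂P = P·∂P + ∂P·P), then tr([∂_L P, ∂_R P]·[∂_D P, P]) = 0 for D ∈ {L, R}; geometrically, the vector ∂_L∂_R X = [∂_L P, ∂_R P] is orthogonal to the tangent vectors [∂_D P, P] of the surface. -/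
open Matrix

noncomputable section

attribute [local instance] Matrix.normedAddCommGroup Matrix.normedSpace

/-! If `A = PA + AP` and `B = PB + BP`, then `PAB = (A - AP)B = AB - A(B - BP) = ABP`, so `P`
commutes with `AB`, with `BA`, hence with `[A, B]`. Cyclicity of the trace then gives
`tr([A, B] C P) = tr(P [A, B] C) = tr([A, B] P C)`, i.e. `tr([A, B] [C, P]) = 0`.
Differentiating `P² = P` shows that every partial derivative of an idempotent family satisfies
`∂P = P ∂P + ∂P P`, so the geometric statement is a special case. -/

open Filter Topology

theorem commute_mul_of_eq_mul_add_mul {R : Type*} [Ring R] {P A B : R}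
    (hA : A = P * A + A * P) (hB : B = P * B + B * P) : Commute P (A * B) := by
  have hPA : P * A = A - A * P := eq_sub_of_add_eq hA.symm
  have hPB : P * B = B - B * P := eq_sub_of_add_eq hB.symm
  calc P * (A * B) = P * A * B := (mul_assoc _ _ _).symm
    _ = A * B - A * (P * B) := by rw [hPA]; noncomm_ring
    _ = A * B * P := by rw [hPB]; noncomm_ring

theorem commute_lie_of_eq_mul_add_mul {R : Type*} [Ring R] {P A B : R}
    (hA : A = P * A + A * P) (hB : B = P * B + B * P) : Commute P ⁅A, B⁆ := by
  rw [Ring.lie_def]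
  exact (commute_mul_of_eq_mul_add_mul hA hB).sub_right (commute_mul_of_eq_mul_add_mul hB hA)

theorem Commute.trace_mul_lie_eq_zero {n R : Type*} [Fintype n] [CommRing R]
    {P D : Matrix n n R} (h : Commute P D) (C : Matrix n n R) : (D * ⁅C, P⁆).trace = 0 := by
  rw [Ring.lie_def, mul_sub, trace_sub, sub_eq_zero, ← mul_assoc, trace_mul_comm, ← mul_assoc,
    ← mul_assoc, h.eq]

theorem mcomm_eq_lie {N : ℕ} (A B : Matrix (Fin N) (Fin N) ℂ) : mcomm A B = ⁅A, B⁆ :=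
  (Ring.lie_def A B).symm

theorem ContinuousLinearMap.fderiv_apply_of_eventually_idempotent {𝕜 E F : Type*}
    [NontriviallyNormedField 𝕜] [NormedAddCommGroup E] [NormedSpace 𝕜 E]
    [NormedAddCommGroup F] [NormedSpace 𝕜 F] (μ : F →L[𝕜] F →L[𝕜] F) {f : E → F} {p : E}
    (hf : DifferentiableAt 𝕜 f p) (hidem : ∀ᶠ q in 𝓝 p, μ (f q) (f q) = f q) (v : E) :
    fderiv 𝕜 f p v = μ (f p) (fderiv 𝕜 f p v) + μ (fderiv 𝕜 f p v) (f p) := by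
  have hμ := μ.hasFDerivAt_of_bilinear hf.hasFDerivAt hf.hasFDerivAt
  have hderiv := (hμ.congr_of_eventuallyEq (EventuallyEq.symm hidem)).fderiv
  simpa using DFunLike.congr_fun hderiv v

theorem Matrix.fderiv_apply_of_eventually_idempotent {𝕜 R n E : Type*}
    [NontriviallyNormedField 𝕜] [CompleteSpace 𝕜] [NormedField R] [NormedAlgebra 𝕜 R]
    [FiniteDimensional 𝕜 R] [Fintype n]
    [NormedAddCommGroup E] [NormedSpace 𝕜 E] {f : E → Matrix n n R} {p : E}
    (hf : DifferentiableAt 𝕜 f p) (hidem : ∀ᶠ q in 𝓝 p, f q * f q = f q) (v : E) :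
    fderiv 𝕜 f p v = f p * fderiv 𝕜 f p v + fderiv 𝕜 f p v * f p :=
  (LinearMap.mul 𝕜 (Matrix n n R)).toContinuousBilinearMap.fderiv_apply_of_eventually_idempotent
    hf hidem v

theorem stmt9_general {N : ℕ}
    (P A B C : Matrix (Fin N) (Fin N) ℂ)
    (hA : A = P * A + A * P) (hB : B = P * B + B * P) :
    (mcomm A B * mcomm C P).trace = 0 ∧
    (∀ Ω : Set (ℝ × ℝ), IsOpen Ω →
      ∀ Pf : ℝ × ℝ → Matrix (Fin N) (Fin N) ℂ, ContDiffOn ℝ 2 Pf Ω →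
        (∀ p ∈ Ω, Pf p * Pf p = Pf p) →
        ∀ p ∈ Ω, ∀ v ∈ ({dL, dR} : Set (ℝ × ℝ)),
          (mcomm (pdv dL Pf p) (pdv dR Pf p) * mcomm (pdv v Pf p) (Pf p)).trace = 0) := by
  simp only [mcomm_eq_lie]
  refine ⟨(commute_lie_of_eq_mul_add_mul hA hB).trace_mul_lie_eq_zero C, ?_⟩
  intro Ω hΩ Pf hPf hidem p hp v _
  have hdiff : DifferentiableAt ℝ Pf p :=
    (hPf.contDiffAt (hΩ.mem_nhds hp)).differentiableAt (by norm_num)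
  have hidem_near : ∀ᶠ q in 𝓝 p, Pf q * Pf q = Pf q := eventually_of_mem (hΩ.mem_nhds hp) hidem
  exact (commute_lie_of_eq_mul_add_mul
    (Matrix.fderiv_apply_of_eventually_idempotent hdiff hidem_near dL)
    (Matrix.fderiv_apply_of_eventually_idempotent hdiff hidem_near dR)).trace_mul_lie_eq_zero _

theorem stmt9 {N : ℕ}
    (P A B C : Matrix (Fin N) (Fin N) ℂ)
    (hP : P * P = P) (hA : A = P * A + A * P) (hB : B = P * B + B * P)
    (hC : C = P * C + C * P) :
    (mcomm A B * mcomm C P).trace = 0 ∧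
    (∀ Ω : Set (ℝ × ℝ), IsOpen Ω →
      ∀ Pf : ℝ × ℝ → Matrix (Fin N) (Fin N) ℂ, ContDiffOn ℝ 2 Pf Ω →
        (∀ p ∈ Ω, Pf p * Pf p = Pf p) →
        ∀ p ∈ Ω, ∀ v ∈ ({dL, dR} : Set (ℝ × ℝ)),
          (mcomm (pdv dL Pf p) (pdv dR Pf p) * mcomm (pdv v Pf p) (Pf p)).trace = 0) :=
  stmt9_general P A B C hA hB
end
end

section
/- Let f be smooth, nowhere zero on Ω, and a solution of the CP^{N−1} Euler–Lagrange equations, and let P := 1 − (1/(f†f)) f f†. Then ∂_R[∂_L P, P] = −∂_L[∂_R P, P] = [∂_L P, ∂_R P], and moreover [∂_L P, ∂_R P] = (1/(f†f))·(P(∂_L f)(∂_R f)†P − P(∂_R f)(∂_L f)†P) + (1/(f†f)²)·((∂_L f)†P(∂_R f) − (∂_R f)†P(∂_L f))·f f†. -/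
open Matrix

noncomputable section

attribute [local instance] Matrix.normedAddCommGroup Matrix.normedSpace

namespace Aux
variable {N : ℕ}

lemma hermIP_apply (v w : Vec N) : hermIP v w = ∑ i, star (v i) * w i := rfl

lemma outerM_apply (v w : Vec N) (i j : Fin N) : outerM v w i j = v i * star (w j) := rfl

lemma star_hermIP (v w : Vec N) : star (hermIP v w) = hermIP w v := by
  simp only [hermIP_apply, star_sum]
  exact Finset.sum_congr rfl fun i _ => by simp [star_mul']; ring

lemma hermIP_smul_right (s : ℂ) (v w : Vec N) : hermIP v (s • w) = s * hermIP v w := by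
  simp only [hermIP_apply, Pi.smul_apply, smul_eq_mul, Finset.mul_sum]
  exact Finset.sum_congr rfl fun i _ => by ring

lemma hermIP_sub_right (u v w : Vec N) : hermIP u (v - w) = hermIP u v - hermIP u w := by
  simp only [hermIP_apply, Pi.sub_apply, mul_sub, Finset.sum_sub_distrib]

lemma hermIP_self_ne_zero {v : Vec N} (hv : v ≠ 0) : hermIP v v ≠ 0 := by
  intro h
  apply hv
  have h2 : ∑ i, Complex.normSq (v i) = 0 := by
    have := congrArg Complex.re h
    simpa [hermIP_apply, Complex.mul_re, Complex.normSq_apply] using this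
  funext i
  have hle : ∀ i ∈ Finset.univ, (0:ℝ) ≤ Complex.normSq (v i) := fun i _ => Complex.normSq_nonneg _
  have := (Finset.sum_eq_zero_iff_of_nonneg hle).1 h2 i (Finset.mem_univ i)
  exact Complex.normSq_eq_zero.1 this

lemma outerM_mulVec (v w x : Vec N) : outerM v w *ᵥ x = hermIP w x • v := by
  funext i
  simp only [outerM, vecMulVec, mulVec, dotProduct, hermIP_apply, Pi.smul_apply, smul_eq_mul,
    Matrix.of_apply, Pi.star_apply, Finset.sum_mul]
  exact Finset.sum_congr rfl fun k _ => by ring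

lemma outerM_mul_matrix (v w : Vec N) (M : Matrix (Fin N) (Fin N) ℂ) :
    outerM v w * M = outerM v (Mᴴ *ᵥ w) := by
  ext i j
  simp only [outerM, vecMulVec, Matrix.mul_apply, mulVec, dotProduct, conjTranspose_apply,
    Matrix.of_apply, Pi.star_apply, star_sum]
  rw [Finset.mul_sum]
  exact Finset.sum_congr rfl fun k _ => by simp [star_mul']; ring

lemma outerM_mul_outerM (a b x y : Vec N) :
    outerM a b * outerM x y = hermIP b x • outerM a y := by
  ext i j
  simp only [outerM, vecMulVec, Matrix.mul_apply, hermIP_apply, Matrix.smul_apply,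
    Matrix.of_apply, Pi.star_apply, smul_eq_mul, Finset.sum_mul]
  exact Finset.sum_congr rfl fun k _ => by ring

lemma outerM_conjTranspose (v w : Vec N) : (outerM v w)ᴴ = outerM w v := by
  ext i j
  simp only [outerM, vecMulVec, conjTranspose_apply, Matrix.of_apply, Pi.star_apply]
  simp [star_mul']; ring

lemma outerM_smul_left (s : ℂ) (v w : Vec N) : outerM (s • v) w = s • outerM v w := by
  ext i j; simp [outerM, vecMulVec, mul_assoc]

lemma outerM_smul_right (s : ℂ) (v w : Vec N) : outerM v (s • w) = star s • outerM v w := by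
  ext i j
  simp only [outerM, vecMulVec, Matrix.smul_apply, Matrix.of_apply, Pi.star_apply,
    Pi.smul_apply, smul_eq_mul]
  simp [star_mul']; ring

lemma outerM_sub_left (u v w : Vec N) : outerM (u - v) w = outerM u w - outerM v w := by
  ext i j
  simp only [outerM, vecMulVec, Matrix.sub_apply, Matrix.of_apply, Pi.sub_apply, sub_mul]

lemma outerM_sub_right (u v w : Vec N) : outerM u (v - w) = outerM u v - outerM u w := by
  ext i j
  simp only [outerM, vecMulVec, Matrix.sub_apply, Matrix.of_apply, Pi.sub_apply, star_sub,
    mul_sub]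

lemma outerM_zero_right (v : Vec N) : outerM v (0 : Vec N) = 0 := by
  ext i j
  simp [outerM, vecMulVec]

-- projM lemmas
variable {g : Vec N}

lemma star_hermIP_self (v : Vec N) : star (hermIP v v) = hermIP v v := star_hermIP v v

lemma one_sub_projM (v : Vec N) : 1 - projM v = (1 / hermIP v v) • outerM v v := by
  simp [projM]

lemma projM_conjTranspose (v : Vec N) : (projM v)ᴴ = projM v := by
  simp only [projM, conjTranspose_sub, conjTranspose_smul, conjTranspose_one,
    outerM_conjTranspose]
  congr 1
  rw [show (star (1 / hermIP v v) : ℂ) = 1 / hermIP v v by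
    rw [star_div₀, star_one, star_hermIP_self]]

lemma projM_mulVec_self {v : Vec N} (hv : hermIP v v ≠ 0) : projM v *ᵥ v = 0 := by
  simp only [projM, sub_mulVec, one_mulVec, smul_mulVec, outerM_mulVec]
  rw [smul_smul, one_div, inv_mul_cancel₀ hv, one_smul, sub_self]

lemma projM_sq {v : Vec N} (hv : hermIP v v ≠ 0) : projM v * projM v = projM v := by
  simp only [projM, sub_mul, mul_sub, one_mul, mul_one, smul_mul_assoc, mul_smul_comm,
    outerM_mul_outerM, smul_smul]
  rw [show 1 / hermIP v v * hermIP v v = 1 by field_simp, one_smul, sub_self, smul_zero,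
    sub_zero]

lemma projM_mulVec (v x : Vec N) :
    projM v *ᵥ x = x - (hermIP v x / hermIP v v) • v := by
  simp only [projM, sub_mulVec, one_mulVec, smul_mulVec, outerM_mulVec, smul_smul]
  ring_nf


variable {p v : ℝ × ℝ} {N : ℕ}

lemma pdv_pi {ι : Type*} [Fintype ι] {E' : ι → Type*} [∀ i, NormedAddCommGroup (E' i)]
    [∀ i, NormedSpace ℝ (E' i)] {u : ℝ × ℝ → ∀ i, E' i} (h : DifferentiableAt ℝ u p) (i : ι) :
    pdv v u p i = pdv v (fun q => u q i) p := by
  unfold pdv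
  rw [show u = (fun q i => u q i) from rfl, fderiv_pi (fun i => differentiableAt_pi.1 h i)]
  rfl

lemma diff_entry {F : ℝ×ℝ → Matrix (Fin N) (Fin N) ℂ} (h : DifferentiableAt ℝ F p) (i j : Fin N) :
    DifferentiableAt ℝ (fun q => F q i j) p :=
  differentiableAt_pi.1 (differentiableAt_pi.1 h i) j

lemma pdv_entry {F : ℝ×ℝ → Matrix (Fin N) (Fin N) ℂ} (h : DifferentiableAt ℝ F p) (i j : Fin N) :
    pdv v F p i j = pdv v (fun q => F q i j) p := by
  have h1 := pdv_pi (v := v) h i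
  have h2 := pdv_pi (v := v) (differentiableAt_pi.1 h i) j
  calc pdv v F p i j = pdv v (fun q => F q i) p j := congrFun h1 j
  _ = _ := h2

lemma pdv_congr {E : Type*} [NormedAddCommGroup E] [NormedSpace ℝ E] {F G : ℝ×ℝ → E}
    (h : F =ᶠ[nhds p] G) : pdv v F p = pdv v G p := by
  unfold pdv; rw [h.fderiv_eq]

lemma pdv_const {E : Type*} [NormedAddCommGroup E] [NormedSpace ℝ E] (A : E) :
    pdv v (fun _ => A) p = 0 := by
  unfold pdv; rw [fderiv_fun_const]; rfl

lemma pdv_add {E : Type*} [NormedAddCommGroup E] [NormedSpace ℝ E] {F G : ℝ×ℝ → E}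
    (hF : DifferentiableAt ℝ F p) (hG : DifferentiableAt ℝ G p) :
    pdv v (fun q => F q + G q) p = pdv v F p + pdv v G p := by
  unfold pdv; rw [fderiv_fun_add hF hG]; rfl

lemma pdv_sub {E : Type*} [NormedAddCommGroup E] [NormedSpace ℝ E] {F G : ℝ×ℝ → E}
    (hF : DifferentiableAt ℝ F p) (hG : DifferentiableAt ℝ G p) :
    pdv v (fun q => F q - G q) p = pdv v F p - pdv v G p := by
  unfold pdv; rw [fderiv_fun_sub hF hG]; rfl

lemma pdv_mul {u w : ℝ×ℝ → ℂ} (hu : DifferentiableAt ℝ u p) (hw : DifferentiableAt ℝ w p) :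
    pdv v (fun q => u q * w q) p = pdv v u p * w p + u p * pdv v w p := by
  unfold pdv; rw [fderiv_fun_mul hu hw]
  simp only [ContinuousLinearMap.add_apply, ContinuousLinearMap.smul_apply, smul_eq_mul]
  ring

lemma pdv_smul {E : Type*} [NormedAddCommGroup E] [NormedSpace ℝ E] [NormedSpace ℂ E]
    [IsScalarTower ℝ ℂ E] {s : ℝ×ℝ → ℂ} {F : ℝ×ℝ → E}
    (hs : DifferentiableAt ℝ s p) (hF : DifferentiableAt ℝ F p) :
    pdv v (fun q => s q • F q) p = pdv v s p • F p + s p • pdv v F p := by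
  unfold pdv; rw [fderiv_fun_smul hs hF]
  simp only [ContinuousLinearMap.add_apply, ContinuousLinearMap.smul_apply,
    ContinuousLinearMap.smulRight_apply]
  abel

lemma pdv_sum {ι : Type*} (s : Finset ι) {u : ι → ℝ×ℝ → ℂ}
    (h : ∀ i ∈ s, DifferentiableAt ℝ (u i) p) :
    pdv v (fun q => ∑ i ∈ s, u i q) p = ∑ i ∈ s, pdv v (u i) p := by
  unfold pdv; rw [fderiv_fun_sum h]; simp

lemma pdv_conj {u : ℝ×ℝ → ℂ} :
    pdv v (fun q => star (u q)) p = star (pdv v u p) := by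
  unfold pdv
  rw [show (fun q => star (u q)) = (Complex.conjCLE : ℂ → ℂ) ∘ u from rfl,
    Complex.conjCLE.comp_fderiv]
  rfl

lemma pdv_inv {u : ℝ×ℝ → ℂ} (hu : DifferentiableAt ℝ u p) (h0 : u p ≠ 0) :
    pdv v (fun q => (u q)⁻¹) p = -(pdv v u p) / (u p)^2 := by
  unfold pdv
  rw [show (fun q => (u q)⁻¹) = Inv.inv ∘ u from rfl,
    fderiv_comp p (differentiableAt_inv h0) hu, fderiv_inv' h0]
  simp only [ContinuousLinearMap.comp_apply, ContinuousLinearMap.neg_apply,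
    ContinuousLinearMap.mulLeftRight_apply]
  have h2 : (u p)⁻¹ * (fderiv ℝ u p) v * (u p)⁻¹ = (fderiv ℝ u p) v / (u p)^2 := by
    rw [pow_two, div_eq_mul_inv, mul_inv]
    ring
  rw [h2, neg_div]

lemma diff_matmul {A B : ℝ×ℝ → Matrix (Fin N) (Fin N) ℂ} (hA : DifferentiableAt ℝ A p)
    (hB : DifferentiableAt ℝ B p) : DifferentiableAt ℝ (fun q => A q * B q) p := by
  refine differentiableAt_pi.2 fun i => differentiableAt_pi.2 fun j => ?_
  have : (fun q => (A q * B q) i j) = fun q => ∑ k, A q i k * B q k j := by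
    funext q; simp [Matrix.mul_apply]
  rw [this]
  exact DifferentiableAt.fun_sum fun k _ => (diff_entry hA i k).fun_mul (diff_entry hB k j)

lemma pdv_matmul {A B : ℝ×ℝ → Matrix (Fin N) (Fin N) ℂ} (hA : DifferentiableAt ℝ A p)
    (hB : DifferentiableAt ℝ B p) :
    pdv v (fun q => A q * B q) p = pdv v A p * B p + A p * pdv v B p := by
  ext i j
  rw [Matrix.add_apply, Matrix.mul_apply, Matrix.mul_apply, pdv_entry (diff_matmul hA hB),
    show (fun q => (A q * B q) i j) = fun q => ∑ k, A q i k * B q k j from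
      funext fun q => Matrix.mul_apply,
    pdv_sum _ (fun k _ => ((diff_entry hA i k).fun_mul (diff_entry hB k j))),
    ← Finset.sum_add_distrib]
  refine Finset.sum_congr rfl fun k _ => ?_
  rw [pdv_mul (diff_entry hA i k) (diff_entry hB k j), pdv_entry hA, pdv_entry hB]

lemma diff_vec_entry {u : ℝ×ℝ → Vec N} (h : DifferentiableAt ℝ u p) (i : Fin N) :
    DifferentiableAt ℝ (fun q => u q i) p := differentiableAt_pi.1 h i

lemma diff_mulVec {M : ℝ×ℝ → Matrix (Fin N) (Fin N) ℂ} {u : ℝ×ℝ → Vec N}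
    (hM : DifferentiableAt ℝ M p) (hu : DifferentiableAt ℝ u p) :
    DifferentiableAt ℝ (fun q => M q *ᵥ u q) p := by
  refine differentiableAt_pi.2 fun i => ?_
  have : (fun q => (M q *ᵥ u q) i) = fun q => ∑ k, M q i k * u q k := by
    funext q; simp [Matrix.mulVec, dotProduct]
  rw [this]
  exact DifferentiableAt.fun_sum fun k _ => (diff_entry hM i k).fun_mul (diff_vec_entry hu k)

lemma pdv_mulVec {M : ℝ×ℝ → Matrix (Fin N) (Fin N) ℂ} {u : ℝ×ℝ → Vec N}
    (hM : DifferentiableAt ℝ M p) (hu : DifferentiableAt ℝ u p) :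
    pdv v (fun q => M q *ᵥ u q) p = pdv v M p *ᵥ u p + M p *ᵥ pdv v u p := by
  funext i
  rw [Pi.add_apply, pdv_pi (diff_mulVec hM hu) i,
    show (fun q => (M q *ᵥ u q) i) = fun q => ∑ k, M q i k * u q k from
      funext fun q => rfl,
    pdv_sum _ (fun k _ => ((diff_entry hM i k).fun_mul (diff_vec_entry hu k)))]
  have hR : (pdv v M p *ᵥ u p) i + (M p *ᵥ pdv v u p) i
      = ∑ k, (pdv v M p i k * u p k + M p i k * pdv v u p k) := by
    simp [Matrix.mulVec, dotProduct, Finset.sum_add_distrib]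
  rw [hR]
  refine Finset.sum_congr rfl fun k _ => ?_
  rw [pdv_mul (diff_entry hM i k) (diff_vec_entry hu k), pdv_entry hM, pdv_pi hu]

lemma diff_conjTranspose {M : ℝ×ℝ → Matrix (Fin N) (Fin N) ℂ} (hM : DifferentiableAt ℝ M p) :
    DifferentiableAt ℝ (fun q => (M q)ᴴ) p := by
  refine differentiableAt_pi.2 fun i => differentiableAt_pi.2 fun j => ?_
  have : (fun q => (M q)ᴴ i j) = fun q => star (M q j i) := rfl
  rw [this]
  exact Complex.conjCLE.differentiableAt.comp p (diff_entry hM j i)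

lemma pdv_conjTranspose {M : ℝ×ℝ → Matrix (Fin N) (Fin N) ℂ} (hM : DifferentiableAt ℝ M p) :
    pdv v (fun q => (M q)ᴴ) p = (pdv v M p)ᴴ := by
  ext i j
  rw [pdv_entry (diff_conjTranspose hM), Matrix.conjTranspose_apply,
    show (fun q => (M q)ᴴ i j) = fun q => star (M q j i) from rfl, pdv_conj, pdv_entry hM]

end Aux

set_option maxHeartbeats 1600000 in
theorem stmt10 {N : ℕ} (hN : 2 ≤ N) (Ω : Set (ℝ × ℝ)) (hΩ : IsOpen Ω)
    (f : ℝ × ℝ → Vec N) (hf : ContDiffOn ℝ (⊤ : ℕ∞) f Ω) (hfz : ∀ p ∈ Ω, f p ≠ 0)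
    (hEL : ∀ p ∈ Ω, EL f p) :
    ∀ p ∈ Ω,
      pdv dR (fun q => mcomm (pdv dL (fun r => projM (f r)) q) (projM (f q))) p
        = mcomm (pdv dL (fun r => projM (f r)) p) (pdv dR (fun r => projM (f r)) p) ∧
      pdv dL (fun q => mcomm (pdv dR (fun r => projM (f r)) q) (projM (f q))) p
        = - mcomm (pdv dL (fun r => projM (f r)) p) (pdv dR (fun r => projM (f r)) p) ∧
      mcomm (pdv dL (fun r => projM (f r)) p) (pdv dR (fun r => projM (f r)) p)
        = (1 / hermIP (f p) (f p)) •
            (outerM (projM (f p) *ᵥ pdv dL f p) (projM (f p) *ᵥ pdv dR f p)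
              - outerM (projM (f p) *ᵥ pdv dR f p) (projM (f p) *ᵥ pdv dL f p))
          + ((hermIP (pdv dL f p) (projM (f p) *ᵥ pdv dR f p)
              - hermIP (pdv dR f p) (projM (f p) *ᵥ pdv dL f p)) / (hermIP (f p) (f p)) ^ 2)
            • outerM (f p) (f p) := by
  classical
  intro p hp
  have hmem : Ω ∈ nhds p := hΩ.mem_nhds hp
  set g : ℝ × ℝ → Matrix (Fin N) (Fin N) ℂ := fun r => projM (f r) with hgdef
  have hf3 : ContDiffOn ℝ 3 f Ω := hf.of_le (WithTop.coe_le_coe.2 le_top)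
  have hc0 : ∀ q ∈ Ω, hermIP (f q) (f q) ≠ 0 := fun q hq => Aux.hermIP_self_ne_zero (hfz q hq)
  have hcp : hermIP (f p) (f p) ≠ 0 := hc0 p hp
  have hfe : ∀ i : Fin N, ContDiffOn ℝ 3 (fun q => f q i) Ω := fun i =>
    (ContinuousLinearMap.proj (R := ℝ) (φ := fun _ : Fin N => ℂ) i).contDiff.comp_contDiffOn hf3
  have hfec : ∀ i : Fin N, ContDiffOn ℝ 3 (fun q => star (f q i)) Ω := fun i =>
    Complex.conjCLE.toContinuousLinearMap.contDiff.comp_contDiffOn (hfe i)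
  have hcC : ContDiffOn ℝ 3 (fun q => hermIP (f q) (f q)) Ω := by
    have he : (fun q => hermIP (f q) (f q)) = fun q => ∑ i, star (f q i) * f q i := rfl
    rw [he]
    exact ContDiffOn.sum (fun i _ => (hfec i).mul (hfe i))
  have hgC : ContDiffOn ℝ 3 g Ω := by
    refine contDiffOn_pi.2 fun i => contDiffOn_pi.2 fun j => ?_
    have he : (fun q => g q i j) = fun q => (1 : Matrix (Fin N) (Fin N) ℂ) i j
        - (hermIP (f q) (f q))⁻¹ * (f q i * star (f q j)) := by
      funext q
      simp [hgdef, projM, outerM, vecMulVec, one_div, Matrix.sub_apply, Matrix.smul_apply]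
    rw [he]
    exact contDiffOn_const.sub ((hcC.inv hc0).mul ((hfe i).mul (hfec j)))
  have hfd : ∀ q ∈ Ω, DifferentiableAt ℝ f q := fun q hq =>
    (hf3.differentiableOn (by norm_num)).differentiableAt (hΩ.mem_nhds hq)
  have hgd : ∀ q ∈ Ω, DifferentiableAt ℝ g q := fun q hq =>
    (hgC.differentiableOn (by norm_num)).differentiableAt (hΩ.mem_nhds hq)
  have hfC' : ContDiffOn ℝ 2 (fderiv ℝ f) Ω := hf3.fderiv_of_isOpen hΩ (by norm_num)
  have hgC' : ContDiffOn ℝ 2 (fderiv (F := Fin N → Fin N → ℂ) ℝ g) Ω :=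
    (ContDiffOn.fderiv_of_isOpen (F := Fin N → Fin N → ℂ) hgC hΩ (by norm_num))
  have hfd' : ∀ (w : ℝ × ℝ), ∀ q ∈ Ω, DifferentiableAt ℝ (fun r => pdv w f r) q := by
    intro w q hq
    have h1 : DifferentiableAt ℝ (fderiv ℝ f) q :=
      (hfC'.differentiableOn (by norm_num)).differentiableAt (hΩ.mem_nhds hq)
    exact (ContinuousLinearMap.apply ℝ (Vec N) w).differentiableAt.comp q h1
  have hgd' : ∀ (w : ℝ × ℝ), ∀ q ∈ Ω, DifferentiableAt ℝ (fun r => pdv w g r) q := by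
    intro w q hq
    have h1 : DifferentiableAt ℝ (fderiv ℝ g) q :=
      (hgC'.differentiableOn (by norm_num)).differentiableAt (hΩ.mem_nhds hq)
    exact (ContinuousLinearMap.apply ℝ (Matrix (Fin N) (Fin N) ℂ) w).differentiableAt.comp q h1
  have hPsq : ∀ q ∈ Ω, g q * g q = g q := fun q hq => Aux.projM_sq (hc0 q hq)
  have hPf : ∀ q ∈ Ω, g q *ᵥ f q = 0 := fun q hq => Aux.projM_mulVec_self (hc0 q hq)
  have hPH : ∀ q, (g q)ᴴ = g q := fun q => Aux.projM_conjTranspose (f q)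
  have hI1 : ∀ (w : ℝ × ℝ), ∀ q ∈ Ω, pdv w g q * g q + g q * pdv w g q = pdv w g q := by
    intro w q hq
    have h1 : pdv w (fun r => g r * g r) q = pdv w g q :=
      Aux.pdv_congr (by filter_upwards [hΩ.mem_nhds hq] with r hr using hPsq r hr)
    rwa [Aux.pdv_matmul (hgd q hq) (hgd q hq)] at h1
  have hI2 : ∀ (w : ℝ × ℝ), ∀ q ∈ Ω, pdv w g q *ᵥ f q + g q *ᵥ pdv w f q = 0 := by
    intro w q hq
    have h1 : pdv w (fun r => g r *ᵥ f r) q = 0 := by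
      rw [Aux.pdv_congr (F := fun r => g r *ᵥ f r) (G := fun _ => (0 : Vec N))
        (by filter_upwards [hΩ.mem_nhds hq] with r hr using hPf r hr)]
      exact Aux.pdv_const 0
    rwa [Aux.pdv_mulVec (hgd q hq) (hfd q hq)] at h1
  have hgH : ∀ (w : ℝ × ℝ), ∀ q ∈ Ω, (pdv w g q)ᴴ = pdv w g q := by
    intro w q hq
    have h2 : (fun r => (g r)ᴴ) = g := funext hPH
    calc (pdv w g q)ᴴ = pdv w (fun r => (g r)ᴴ) q := (Aux.pdv_conjTranspose (hgd q hq)).symm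
    _ = pdv w g q := by rw [h2]
  -- Clairaut
  have hsymm : pdv dR (fun q => pdv dL f q) p = pdv dL (fun q => pdv dR f q) p := by
    have hev : ∀ᶠ y in nhds p, HasFDerivAt f (fderiv ℝ f y) y := by
      filter_upwards [hmem] with y hy using (hfd y hy).hasFDerivAt
    have hx : HasFDerivAt (fderiv ℝ f) (fderiv ℝ (fderiv ℝ f) p) p :=
      ((hfC'.differentiableOn (by norm_num)).differentiableAt hmem).hasFDerivAt
    have e1 : ∀ w w' : ℝ × ℝ, pdv w (fun q => pdv w' f q) p = fderiv ℝ (fderiv ℝ f) p w w' := by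
      intro w w'
      show fderiv ℝ (fun q => fderiv ℝ f q w') p w = _
      rw [show (fun q => fderiv ℝ f q w')
            = ⇑(ContinuousLinearMap.apply ℝ (Vec N) w') ∘ fderiv ℝ f from rfl,
        fderiv_comp p (ContinuousLinearMap.apply ℝ (Vec N) w').differentiableAt
          hx.differentiableAt, ContinuousLinearMap.fderiv]
      rfl
    rw [e1, e1]
    exact second_derivative_symmetric_of_eventually hev hx dR dL
  -- key commutator vanishing
  have hkey : ∀ X : Matrix (Fin N) (Fin N) ℂ,
      Xᴴ = X →
      X *ᵥ f p + pdv dL g p *ᵥ pdv dR f p + pdv dR g p *ᵥ pdv dL f p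
        + g p *ᵥ pdv dL (fun q => pdv dR f q) p = 0 →
      mcomm X (g p) = 0 := by
    intro X hXH hXf
    have hPA : ∀ w : ℝ × ℝ, g p * pdv w g p = pdv w g p - pdv w g p * g p := by
      intro w
      have h := hI1 w p hp
      linear_combination (norm := abel) h
    have hAf : ∀ w : ℝ × ℝ, pdv w g p *ᵥ f p = -(g p *ᵥ pdv w f p) := by
      intro w
      have h := hI2 w p hp
      linear_combination (norm := abel) h
    have hproj : ∀ x : Vec N, g p *ᵥ x = x - (hermIP (f p) x / hermIP (f p) (f p)) • f p :=
      fun x => Aux.projM_mulVec (f p) x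
    have e2 : ∀ w w' : ℝ × ℝ, g p *ᵥ (pdv w g p *ᵥ pdv w' f p)
        = -((hermIP (f p) (pdv w' f p) / hermIP (f p) (f p)) • (g p *ᵥ pdv w f p)) := by
      intro w w'
      rw [Matrix.mulVec_mulVec, hPA w, Matrix.sub_mulVec, ← Matrix.mulVec_mulVec, hproj,
        Matrix.mulVec_sub, Matrix.mulVec_smul, hAf w]
      module
    have e4 : g p *ᵥ (g p *ᵥ pdv dL (fun q => pdv dR f q) p)
        = (1 / hermIP (f p) (f p)) • (hermIP (f p) (pdv dR f p) • (g p *ᵥ pdv dL f p)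
            + hermIP (f p) (pdv dL f p) • (g p *ᵥ pdv dR f p)) := by
      rw [Matrix.mulVec_mulVec, hPsq p hp]
      have hel := hEL p hp
      unfold EL at hel
      rw [Matrix.mulVec_sub, sub_eq_zero] at hel
      rw [hel, Matrix.mulVec_smul, Matrix.mulVec_add, Matrix.mulVec_smul, Matrix.mulVec_smul]
    have hPXf : g p *ᵥ (X *ᵥ f p) = 0 := by
      have h1 := congrArg (fun u => g p *ᵥ u) hXf
      simp only [Matrix.mulVec_add, Matrix.mulVec_zero] at h1
      rw [e2 dL dR, e2 dR dL, e4] at h1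
      linear_combination (norm := module) h1
    have hQXP : ((1 : Matrix (Fin N) (Fin N) ℂ) - g p) * X * g p = 0 := by
      have hQ : (1 : Matrix (Fin N) (Fin N) ℂ) - g p
          = (1 / hermIP (f p) (f p)) • outerM (f p) (f p) := Aux.one_sub_projM (f p)
      rw [hQ, Matrix.smul_mul, Matrix.smul_mul, Matrix.mul_assoc, Aux.outerM_mul_matrix]
      have h2 : (X * g p)ᴴ *ᵥ f p = g p *ᵥ (X *ᵥ f p) := by
        rw [conjTranspose_mul, hXH, hPH p, ← Matrix.mulVec_mulVec]
      rw [h2, hPXf, Aux.outerM_zero_right, smul_zero]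
    have hPXQ : g p * X * ((1 : Matrix (Fin N) (Fin N) ℂ) - g p) = 0 := by
      have h3 := congrArg conjTranspose hQXP
      rw [conjTranspose_mul, conjTranspose_mul, conjTranspose_sub, conjTranspose_one,
        conjTranspose_zero, hXH, hPH p] at h3
      calc g p * X * ((1 : Matrix (Fin N) (Fin N) ℂ) - g p)
          = g p * (X * ((1 : Matrix (Fin N) (Fin N) ℂ) - g p)) := by rw [Matrix.mul_assoc]
      _ = 0 := h3
    show X * g p - g p * X = 0
    have expand : X * g p - g p * X
        = ((1 : Matrix (Fin N) (Fin N) ℂ) - g p) * X * g p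
          - g p * X * ((1 : Matrix (Fin N) (Fin N) ℂ) - g p) := by
      noncomm_ring
    rw [expand, hQXP, hPXQ, sub_zero]
  -- hermitianity of second derivatives
  have hXH : ∀ w w' : ℝ × ℝ,
      (pdv w (fun r => pdv w' g r) p)ᴴ = pdv w (fun r => pdv w' g r) p := by
    intro w w'
    calc (pdv w (fun r => pdv w' g r) p)ᴴ
        = pdv w (fun r => (pdv w' g r)ᴴ) p := (Aux.pdv_conjTranspose (hgd' w' p hp)).symm
    _ = pdv w (fun r => pdv w' g r) p :=
        Aux.pdv_congr (by filter_upwards [hmem] with r hr using hgH w' r hr)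
  -- second derivative acting on f, L-then-R
  have hXf1 : pdv dR (fun r => pdv dL g r) p *ᵥ f p + pdv dL g p *ᵥ pdv dR f p
      + pdv dR g p *ᵥ pdv dL f p + g p *ᵥ pdv dL (fun q => pdv dR f q) p = 0 := by
    have h1 : pdv dR (fun q => (fun r => pdv dL g r) q *ᵥ f q
        + g q *ᵥ (fun r => pdv dL f r) q) p = 0 := by
      rw [Aux.pdv_congr (G := fun _ => (0 : Vec N))
        (by filter_upwards [hmem] with r hr using hI2 dL r hr)]
      exact Aux.pdv_const 0
    rw [Aux.pdv_add (Aux.diff_mulVec (hgd' dL p hp) (hfd p hp))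
        (Aux.diff_mulVec (hgd p hp) (hfd' dL p hp)),
      Aux.pdv_mulVec (hgd' dL p hp) (hfd p hp),
      Aux.pdv_mulVec (hgd p hp) (hfd' dL p hp)] at h1
    rw [hsymm] at h1
    linear_combination (norm := module) h1
  have hXf2 : pdv dL (fun r => pdv dR g r) p *ᵥ f p + pdv dL g p *ᵥ pdv dR f p
      + pdv dR g p *ᵥ pdv dL f p + g p *ᵥ pdv dL (fun q => pdv dR f q) p = 0 := by
    have h1 : pdv dL (fun q => (fun r => pdv dR g r) q *ᵥ f q
        + g q *ᵥ (fun r => pdv dR f r) q) p = 0 := by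
      rw [Aux.pdv_congr (G := fun _ => (0 : Vec N))
        (by filter_upwards [hmem] with r hr using hI2 dR r hr)]
      exact Aux.pdv_const 0
    rw [Aux.pdv_add (Aux.diff_mulVec (hgd' dR p hp) (hfd p hp))
        (Aux.diff_mulVec (hgd p hp) (hfd' dR p hp)),
      Aux.pdv_mulVec (hgd' dR p hp) (hfd p hp),
      Aux.pdv_mulVec (hgd p hp) (hfd' dR p hp)] at h1
    linear_combination (norm := module) h1
  have hXcomm : mcomm (pdv dR (fun r => pdv dL g r) p) (g p) = 0 :=
    hkey _ (hXH dR dL) hXf1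
  have hYcomm : mcomm (pdv dL (fun r => pdv dR g r) p) (g p) = 0 :=
    hkey _ (hXH dL dR) hXf2
  refine ⟨?_, ?_, ?_⟩
  · -- goal 1
    have he : (fun q => mcomm (pdv dL g q) (projM (f q)))
        = fun q => (fun r => pdv dL g r) q * g q - g q * (fun r => pdv dL g r) q := rfl
    rw [he, Aux.pdv_sub (Aux.diff_matmul (hgd' dL p hp) (hgd p hp))
        (Aux.diff_matmul (hgd p hp) (hgd' dL p hp)),
      Aux.pdv_matmul (hgd' dL p hp) (hgd p hp), Aux.pdv_matmul (hgd p hp) (hgd' dL p hp)]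
    have h := hXcomm
    simp only [mcomm] at h ⊢
    linear_combination (norm := abel) h
  · -- goal 2
    have he : (fun q => mcomm (pdv dR g q) (projM (f q)))
        = fun q => (fun r => pdv dR g r) q * g q - g q * (fun r => pdv dR g r) q := rfl
    rw [he, Aux.pdv_sub (Aux.diff_matmul (hgd' dR p hp) (hgd p hp))
        (Aux.diff_matmul (hgd p hp) (hgd' dR p hp)),
      Aux.pdv_matmul (hgd' dR p hp) (hgd p hp), Aux.pdv_matmul (hgd p hp) (hgd' dR p hp)]
    have h := hYcomm
    simp only [mcomm] at h ⊢
    linear_combination (norm := abel) h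
  · -- goal 3
    have hconjd : ∀ i : Fin N, DifferentiableAt ℝ (fun q => star (f q i)) p := fun i =>
      Complex.conjCLE.differentiableAt.comp p (Aux.diff_vec_entry (hfd p hp) i)
    have hWd : DifferentiableAt ℝ (fun q => outerM (f q) (f q)) p := by
      refine differentiableAt_pi.2 fun i => differentiableAt_pi.2 fun j => ?_
      show DifferentiableAt ℝ (fun q => f q i * star (f q j)) p
      exact (Aux.diff_vec_entry (hfd p hp) i).mul (hconjd j)
    have hcd : DifferentiableAt ℝ (fun q => hermIP (f q) (f q)) p :=
      (hcC.differentiableOn (by norm_num)).differentiableAt hmem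
    have hdc : ∀ w : ℝ × ℝ, pdv w (fun q => hermIP (f q) (f q)) p
        = hermIP (pdv w f p) (f p) + hermIP (f p) (pdv w f p) := by
      intro w
      have he2 : (fun q => hermIP (f q) (f q)) = fun q => ∑ i, star (f q i) * f q i := rfl
      rw [he2, Aux.pdv_sum _ (fun i _ => (hconjd i).fun_mul (Aux.diff_vec_entry (hfd p hp) i))]
      have h3 : ∀ i : Fin N, pdv w (fun q => star (f q i) * f q i) p
          = star (pdv w f p i) * f p i + star (f p i) * pdv w f p i := by
        intro i
        rw [Aux.pdv_mul (hconjd i) (Aux.diff_vec_entry (hfd p hp) i),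
          show (fun q => star (f q i)) = fun q => star ((fun r => f r i) q) from rfl,
          Aux.pdv_conj, ← Aux.pdv_pi (hfd p hp) i]
      rw [Finset.sum_congr rfl (fun i _ => h3 i), Finset.sum_add_distrib]
      rfl
    have hdW : ∀ w : ℝ × ℝ, pdv w (fun q => outerM (f q) (f q)) p
        = outerM (pdv w f p) (f p) + outerM (f p) (pdv w f p) := by
      intro w
      ext i j
      rw [Matrix.add_apply, Aux.pdv_entry hWd,
        show (fun q => outerM (f q) (f q) i j) = fun q => f q i * star (f q j) from rfl,
        Aux.pdv_mul (Aux.diff_vec_entry (hfd p hp) i) (hconjd j),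
        show (fun q => star (f q j)) = fun q => star ((fun r => f r j) q) from rfl,
        Aux.pdv_conj, ← Aux.pdv_pi (hfd p hp) j, ← Aux.pdv_pi (hfd p hp) i]
      simp [Aux.outerM_apply]
    have hgw : ∀ w : ℝ × ℝ, pdv w g p
        = ((hermIP (pdv w f p) (f p) + hermIP (f p) (pdv w f p)) / hermIP (f p) (f p) ^ 2)
            • outerM (f p) (f p)
          - (1 / hermIP (f p) (f p)) • (outerM (pdv w f p) (f p) + outerM (f p) (pdv w f p)) := by
      intro w
      have hinvd : DifferentiableAt ℝ (fun q => (hermIP (f q) (f q))⁻¹) p := hcd.inv hcp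
      have he4 : g = fun q => (fun _ => (1 : Matrix (Fin N) (Fin N) ℂ)) q
          - (fun r => (hermIP (f r) (f r))⁻¹ • outerM (f r) (f r)) q := by
        funext q
        show projM (f q) = _
        simp [projM, one_div]
      rw [he4, Aux.pdv_sub (differentiableAt_const _) (hinvd.fun_smul hWd),
        Aux.pdv_const, Aux.pdv_smul hinvd hWd,
        Aux.pdv_inv hcd hcp, hdc w, hdW w]
      match_scalars <;> field_simp <;> ring
    rw [hgw dL, hgw dR,
      show projM (f p) *ᵥ pdv dL f p
        = pdv dL f p - (hermIP (f p) (pdv dL f p) / hermIP (f p) (f p)) • f p from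
        Aux.projM_mulVec _ _,
      show projM (f p) *ᵥ pdv dR f p
        = pdv dR f p - (hermIP (f p) (pdv dR f p) / hermIP (f p) (f p)) • f p from
        Aux.projM_mulVec _ _]
    simp only [mcomm, Aux.outerM_sub_left, Aux.outerM_sub_right, Aux.outerM_smul_left,
      Aux.outerM_smul_right, Aux.hermIP_sub_right, Aux.hermIP_smul_right,
      Aux.star_hermIP, star_div₀, sub_mul, mul_sub, Matrix.smul_mul, Matrix.mul_smul,
      Aux.outerM_mul_outerM, smul_smul, smul_sub, smul_add, sub_smul, add_smul, add_mul, mul_add]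
    match_scalars <;> field_simp [hcp] <;> ring
end
end
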